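/- The reciprocity relation G(y,x;Γ₀) = G(x,y;Γ₀) holds for all x, y ∈ B₁ with x ≠ y, where G(·,·;Γ₀) is the two-layered Green's function with planar interface Γ₀. -/

import Mathlib

open MeasureTheory Complex Filter Metric Set
open scoped ENNReal

noncomputable section

/-- Points of the plane `ℝ²`. -/
abbrev Pt : Type := EuclideanSpace ℝ (Fin 2)

/-- The point `(a, b) ∈ ℝ²`. -/
def pt (a b : ℝ) : Pt := (WithLp.equiv 2 (Fin 2 → ℝ)).symm ![a, b]

/-- The standard basis vectors of `ℝ²`. -/
def e2 (i : Fin 2) : Pt := EuclideanSpace.single i (1 : ℝ)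

/-- The (classical, pointwise) Laplacian of a complex-valued function on `ℝ²`. -/
def lap (u : Pt → ℂ) (x : Pt) : ℂ :=
  ∑ i : Fin 2, fderiv ℝ (fun y => fderiv ℝ u y (e2 i)) x (e2 i)

/-- The Sommerfeld radiation condition
`lim_{r→∞} √r (∂w/∂r - i κ w) = 0`, `r = |x|`, for a (piecewise constant)
wave number `κ : ℝ² → ℝ`. -/
def SRC (κ : Pt → ℝ) (w : Pt → ℂ) : Prop :=
  Tendsto (fun x : Pt =>
      Real.sqrt ‖x‖ * ‖fderiv ℝ w x ((‖x‖)⁻¹ • x) - Complex.I * (κ x : ℂ) * w x‖)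
    (Bornology.cobounded Pt) (nhds 0)

/-- The open region `Ω₁` above the graph of `f`. -/
def upper (f : ℝ → ℝ) : Set Pt := {x | f (x 0) < x 1}

/-- The open region `Ω₂` below the graph of `f`. -/
def lower (f : ℝ → ℝ) : Set Pt := {x | x 1 < f (x 0)}

/-- The interface `Γ`, the graph of `f`. -/
def graphOf (f : ℝ → ℝ) : Set Pt := {x | x 1 = f (x 0)}

/-- The piecewise constant wave number: `κ₁` above the graph of `f`, `κ₂` below. -/
def kf (f : ℝ → ℝ) (κ₁ κ₂ : ℝ) (x : Pt) : ℝ := if f (x 0) < x 1 then κ₁ else κ₂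

/-- The profile of the special interface `Γ_R`. -/
def fR (R : ℝ) (t : ℝ) : ℝ := if R ≤ |t| then 0 else -Real.sqrt (R ^ 2 - t ^ 2)

/-- The lens-shaped domain `B₁` between `Γ_R` and `Γ₀`. -/
def B1 (R : ℝ) : Set Pt :=
  {x | |x 0| < R ∧ -Real.sqrt (R ^ 2 - (x 0) ^ 2) < x 1 ∧ x 1 < 0}

/-- The domain `B₂` between `Γ_R` and `Γ` (the graph of `f`). -/
def B2 (f : ℝ → ℝ) (R : ℝ) : Set Pt :=
  {x | |x 0| < R ∧ -Real.sqrt (R ^ 2 - (x 0) ^ 2) < x 1 ∧ x 1 < f (x 0)}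

/-- `β_j(ξ) = √(κ_j² - ξ²)` for `|ξ| < κ_j`, `= i √(ξ² - κ_j²)` for `|ξ| > κ_j`. -/
def beta (κ ξ : ℝ) : ℂ :=
  if ξ ^ 2 ≤ κ ^ 2 then (Real.sqrt (κ ^ 2 - ξ ^ 2) : ℂ)
  else Complex.I * (Real.sqrt (ξ ^ 2 - κ ^ 2) : ℂ)

/-- The scattered/transmitted part `G^s(x, x_s; Γ₀)` of the two-layered Green's function
for the planar interface `Γ₀`, given by the explicit Fourier-integral representations. -/
def Gs0 (κ₁ κ₂ : ℝ) (x xs : Pt) : ℂ :=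
  if 0 ≤ x 1 ∧ 0 ≤ xs 1 then
    Complex.I / (4 * Real.pi) *
      ∫ ξ : ℝ, (beta κ₁ ξ)⁻¹ * ((beta κ₁ ξ - beta κ₂ ξ) / (beta κ₁ ξ + beta κ₂ ξ)) *
        Complex.exp (Complex.I * beta κ₁ ξ * (x 1 + xs 1)) *
        Complex.exp (Complex.I * ξ * (x 0 - xs 0))
  else if x 1 < 0 ∧ 0 ≤ xs 1 then
    Complex.I / (2 * Real.pi) *
      ∫ ξ : ℝ, (beta κ₁ ξ + beta κ₂ ξ)⁻¹ *
        Complex.exp (Complex.I * (beta κ₁ ξ * (xs 1) - beta κ₂ ξ * (x 1))) *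
        Complex.exp (Complex.I * ξ * (x 0 - xs 0))
  else if 0 ≤ x 1 ∧ xs 1 < 0 then
    Complex.I / (2 * Real.pi) *
      ∫ ξ : ℝ, (beta κ₁ ξ + beta κ₂ ξ)⁻¹ *
        Complex.exp (Complex.I * (beta κ₁ ξ * (x 1) - beta κ₂ ξ * (xs 1))) *
        Complex.exp (Complex.I * ξ * (x 0 - xs 0))
  else
    Complex.I / (4 * Real.pi) *
      ∫ ξ : ℝ, (beta κ₂ ξ)⁻¹ * ((beta κ₂ ξ - beta κ₁ ξ) / (beta κ₁ ξ + beta κ₂ ξ)) *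
        Complex.exp (-Complex.I * beta κ₂ ξ * (x 1 + xs 1)) *
        Complex.exp (Complex.I * ξ * (x 0 - xs 0))

/-- The scattered/transmitted part `U^s(x, x_s; Γ₀)` of the two-layered field generated by
the hyper-singular source `-∂_{x_ℓ}δ(x - x_s)`, via the explicit Fourier-integral formulas
(`ℓ = 0` is the paper's `ℓ = 1`, `ℓ = 1` is the paper's `ℓ = 2`). -/
def Us0 (ℓ : Fin 2) (κ₁ κ₂ : ℝ) (x xs : Pt) : ℂ :=
  if ℓ = 0 then
    (if 0 ≤ x 1 ∧ 0 ≤ xs 1 then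
      -(1 : ℂ) / (4 * Real.pi) *
        ∫ ξ : ℝ, (beta κ₁ ξ)⁻¹ * ((beta κ₁ ξ - beta κ₂ ξ) / (beta κ₁ ξ + beta κ₂ ξ)) * (ξ : ℂ) *
          Complex.exp (Complex.I * beta κ₁ ξ * (x 1 + xs 1)) *
          Complex.exp (Complex.I * ξ * (x 0 - xs 0))
    else if x 1 < 0 ∧ 0 ≤ xs 1 then
      -(1 : ℂ) / (2 * Real.pi) *
        ∫ ξ : ℝ, (beta κ₁ ξ + beta κ₂ ξ)⁻¹ * (ξ : ℂ) *
          Complex.exp (Complex.I * (beta κ₁ ξ * (xs 1) - beta κ₂ ξ * (x 1))) *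
          Complex.exp (Complex.I * ξ * (x 0 - xs 0))
    else if 0 ≤ x 1 ∧ xs 1 < 0 then
      -(1 : ℂ) / (2 * Real.pi) *
        ∫ ξ : ℝ, (beta κ₁ ξ + beta κ₂ ξ)⁻¹ * (ξ : ℂ) *
          Complex.exp (Complex.I * (beta κ₁ ξ * (x 1) - beta κ₂ ξ * (xs 1))) *
          Complex.exp (Complex.I * ξ * (x 0 - xs 0))
    else
      -(1 : ℂ) / (4 * Real.pi) *
        ∫ ξ : ℝ, (beta κ₂ ξ)⁻¹ * ((beta κ₂ ξ - beta κ₁ ξ) / (beta κ₂ ξ + beta κ₁ ξ)) * (ξ : ℂ) *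
          Complex.exp (-Complex.I * beta κ₂ ξ * (x 1 + xs 1)) *
          Complex.exp (Complex.I * ξ * (x 0 - xs 0)))
  else
    (if 0 ≤ x 1 ∧ 0 ≤ xs 1 then
      (1 : ℂ) / (4 * Real.pi) *
        ∫ ξ : ℝ, ((beta κ₁ ξ - beta κ₂ ξ) / (beta κ₁ ξ + beta κ₂ ξ)) *
          Complex.exp (Complex.I * beta κ₁ ξ * (x 1 + xs 1)) *
          Complex.exp (Complex.I * ξ * (x 0 - xs 0))
    else if x 1 < 0 ∧ 0 ≤ xs 1 then
      (1 : ℂ) / (2 * Real.pi) *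
        ∫ ξ : ℝ, (beta κ₁ ξ / (beta κ₁ ξ + beta κ₂ ξ)) *
          Complex.exp (Complex.I * (beta κ₁ ξ * (xs 1) - beta κ₂ ξ * (x 1))) *
          Complex.exp (Complex.I * ξ * (x 0 - xs 0))
    else if 0 ≤ x 1 ∧ xs 1 < 0 then
      -(1 : ℂ) / (2 * Real.pi) *
        ∫ ξ : ℝ, (beta κ₂ ξ / (beta κ₁ ξ + beta κ₂ ξ)) *
          Complex.exp (Complex.I * (beta κ₁ ξ * (x 1) - beta κ₂ ξ * (xs 1))) *
          Complex.exp (Complex.I * ξ * (x 0 - xs 0))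
    else
      -(1 : ℂ) / (4 * Real.pi) *
        ∫ ξ : ℝ, ((beta κ₂ ξ - beta κ₁ ξ) / (beta κ₂ ξ + beta κ₁ ξ)) *
          Complex.exp (-Complex.I * beta κ₂ ξ * (x 1 + xs 1)) *
          Complex.exp (Complex.I * ξ * (x 0 - xs 0)))

/-- Characterization of the outgoing fundamental solution `Φ_κ(x,y) = (i/4) H₀⁽¹⁾(κ|x-y|)`
of the Helmholtz equation in `ℝ²`. -/
structure IsFundSol (κ : ℝ) (Φ : Pt → Pt → ℂ) : Prop where
  symm : ∀ x y, Φ x y = Φ y x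
  smooth : ∀ y : Pt, ContDiffOn ℝ (⊤ : ℕ∞) (fun x => Φ x y) {y}ᶜ
  helmholtz : ∀ y x : Pt, x ≠ y → lap (fun z => Φ z y) x + (κ : ℂ) ^ 2 * Φ x y = 0
  radiating : ∀ y : Pt, SRC (fun _ => κ) (fun x => Φ x y)
  logSingularity : ∃ C : ℝ, ∀ x y : Pt, x ≠ y → ‖x - y‖ < 1 →
    ‖Φ x y - (-(1 / (2 * Real.pi)) * (Real.log ‖x - y‖ : ℂ))‖ ≤ C

/-- The incident hyper-singular point source `∂_{x_ℓ}Φ_κ(x, y)` (`y` is the source point). -/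
def dPhi (Φ : Pt → Pt → ℂ) (ℓ : Fin 2) (x y : Pt) : ℂ :=
  fderiv ℝ (fun z => Φ z y) x (e2 ℓ)

/-- The total two-layered Green's function `G(x, y; Γ₀)` for the planar interface `Γ₀`,
assembled from the explicit scattered part `Gs0` and the free-space fundamental solutions
`Φ₁, Φ₂` of the two half-spaces. -/
def G0 (κ₁ κ₂ : ℝ) (Φ₁ Φ₂ : Pt → Pt → ℂ) (x y : Pt) : ℂ :=
  Gs0 κ₁ κ₂ x y +
    (if 0 ≤ x 1 ∧ 0 ≤ y 1 then Φ₁ x y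
     else if x 1 < 0 ∧ y 1 < 0 then Φ₂ x y else 0)

/-- The total two-layered field `U(x, x_s; Γ₀)` for the hyper-singular source
`-∂_{x_ℓ}δ(· - x_s)` with `x_s` in the upper half-plane. -/
def U0 (ℓ : Fin 2) (κ₁ κ₂ : ℝ) (Φ₁ : Pt → Pt → ℂ) (x xs : Pt) : ℂ :=
  Us0 ℓ κ₁ κ₂ x xs + (if 0 ≤ x 1 then dPhi Φ₁ ℓ x xs else 0)

/-- The boundary operator `B`: `none` is the sound-soft (Dirichlet) condition `Bu = u`,
`some λ` is the impedance condition `Bu = ∂_ν u + i λ u` (`λ = 0` gives Neumann);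
`ν` is the outward unit normal field of the obstacle. -/
def bcOp (ν : Pt → Pt) : Option (Pt → ℝ) → (Pt → ℂ) → Pt → ℂ
  | none => fun w x => w x
  | some lam => fun w x => fderiv ℝ w x (ν x) + Complex.I * (lam x : ℂ) * w x

/-- `u` is a (classical) solution of the transmission scattering problem (1.1):
interface the graph of `f`, wave numbers `κ₁/κ₂`, impenetrable obstacle `D` with boundary
operator `bc` (outward normal `ν`), incident field `uinc` singular at `xs`; the scattered
field (`u - uinc` above the interface, `u` below) satisfies the Sommerfeld radiation
condition. -/
def SolvesObs (f : ℝ → ℝ) (κ₁ κ₂ : ℝ) (D : Set Pt) (ν : Pt → Pt) (bc : Option (Pt → ℝ))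
    (uinc : Pt → ℂ) (xs : Pt) (u : Pt → ℂ) : Prop :=
  ContinuousOn u ((closure D)ᶜ \ {xs}) ∧
  (∀ x ∈ upper f, x ∉ closure D → x ≠ xs → lap u x + (κ₁ : ℂ) ^ 2 * u x = 0) ∧
  (∀ x ∈ lower f, x ∉ closure D → x ≠ xs → lap u x + (κ₂ : ℂ) ^ 2 * u x = 0) ∧
  (∀ x ∈ frontier D, bcOp ν bc u x = 0) ∧
  SRC (kf f κ₁ κ₂) (fun x => if f (x 0) < x 1 then u x - uinc x else u x)

/-- `u` is a (classical) solution of the scattering problem (1.2) for a penetrable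
inhomogeneity with refractive index `n`. -/
def SolvesMed (f : ℝ → ℝ) (κ₁ κ₂ : ℝ) (n : Pt → ℂ)
    (uinc : Pt → ℂ) (xs : Pt) (u : Pt → ℂ) : Prop :=
  ContinuousOn u {xs}ᶜ ∧
  (∀ x ∈ upper f, x ≠ xs → lap u x + (κ₁ : ℂ) ^ 2 * n x * u x = 0) ∧
  (∀ x ∈ lower f, x ≠ xs → lap u x + (κ₂ : ℂ) ^ 2 * n x * u x = 0) ∧
  SRC (kf f κ₁ κ₂) (fun x => if f (x 0) < x 1 then u x - uinc x else u x)

/-- `u` is a (classical) solution of the two-layered scattering problem with interface the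
graph of `f` and no embedded obstacle. -/
def SolvesNoObs (f : ℝ → ℝ) (κ₁ κ₂ : ℝ) (uinc : Pt → ℂ) (xs : Pt) (u : Pt → ℂ) : Prop :=
  ContinuousOn u {xs}ᶜ ∧
  (∀ x ∈ upper f, x ≠ xs → lap u x + (κ₁ : ℂ) ^ 2 * u x = 0) ∧
  (∀ x ∈ lower f, x ≠ xs → lap u x + (κ₂ : ℂ) ^ 2 * u x = 0) ∧
  SRC (kf f κ₁ κ₂) (fun x => if f (x 0) < x 1 then u x - uinc x else u x)

/-- The total two-layered Green's function `G(·,·;Γ)` for the interface given by the graph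
of `f`: for each source `y`, `x ↦ G x y` solves the Helmholtz equation with the piecewise
wave number away from `y`, and the scattered part (total field minus the fundamental
solution of the half-space containing `y`, on that side) is radiating. -/
structure IsTotalGreen (f : ℝ → ℝ) (κ₁ κ₂ : ℝ) (Φ₁ Φ₂ : Pt → Pt → ℂ)
    (G : Pt → Pt → ℂ) : Prop where
  eq_upper : ∀ y : Pt, ∀ x ∈ upper f, x ≠ y →
    lap (fun z => G z y) x + (κ₁ : ℂ) ^ 2 * G x y = 0
  eq_lower : ∀ y : Pt, ∀ x ∈ lower f, x ≠ y →
    lap (fun z => G z y) x + (κ₂ : ℂ) ^ 2 * G x y = 0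
  continuousOn : ∀ y : Pt, ContinuousOn (fun x => G x y) {y}ᶜ
  radiating : ∀ y : Pt, SRC (kf f κ₁ κ₂)
    (fun x => if f (y 0) < y 1 then (if f (x 0) < x 1 then G x y - Φ₁ x y else G x y)
              else (if x 1 < f (x 0) then G x y - Φ₂ x y else G x y))

/-- A smooth, compactly supported test function with support in `s`. -/
def TestOn (s : Set Pt) (φ : Pt → ℝ) : Prop :=
  ContDiff ℝ (⊤ : ℕ∞) φ ∧ HasCompactSupport φ ∧ tsupport φ ⊆ s

/-- `g` is the weak (distributional) partial derivative of `u` in the `i`-th coordinate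
direction on the set `s`. -/
def IsWeakPartial (s : Set Pt) (i : Fin 2) (u g : Pt → ℂ) : Prop :=
  ∀ φ : Pt → ℝ, TestOn s φ →
    ∫ x in s, u x * (fderiv ℝ φ x (e2 i) : ℂ) = -∫ x in s, g x * (φ x : ℂ)

/-- Membership in the Sobolev space `W^{2,p}(s)`: `u` and its weak partial derivatives up
to order two are `p`-integrable on `s`. -/
def MemW2p (p : ℝ) (s : Set Pt) (u : Pt → ℂ) : Prop :=
  MemLp u (ENNReal.ofReal p) (volume.restrict s) ∧
  ∃ g : Fin 2 → Pt → ℂ, ∃ h : Fin 2 → Fin 2 → Pt → ℂ,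
    (∀ i, IsWeakPartial s i u (g i) ∧ MemLp (g i) (ENNReal.ofReal p) (volume.restrict s)) ∧
    ∀ i j, IsWeakPartial s j (g i) (h i j) ∧
      MemLp (h i j) (ENNReal.ofReal p) (volume.restrict s)

/-- Membership in `W^{2,p}_loc(ℝ²)`. -/
def MemW2pLoc (p : ℝ) (u : Pt → ℂ) : Prop :=
  ∀ z : Pt, ∃ ε > 0, MemW2p p (Metric.ball z ε) u

/-- Membership in `L^p_loc(ℝ²)`. -/
def MemLpLoc (p : ℝ) (u : Pt → ℂ) : Prop :=
  ∀ z : Pt, ∃ ε > 0, MemLp u (ENNReal.ofReal p) (volume.restrict (Metric.ball z ε))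

/-- Integral over the circle `∂B_r` of a real-valued function (arclength measure). -/
def circInt (r : ℝ) (g : Pt → ℝ) : ℝ :=
  ∫ θ in (0:ℝ)..(2 * Real.pi), g (r • pt (Real.cos θ) (Real.sin θ)) * r

/-- Integral over the circle `∂B_ε(z)` of a complex integrand depending on the point and
the outward unit normal. -/
def sphInt (z : Pt) (ε : ℝ) (g : Pt → Pt → ℂ) : ℂ :=
  ∫ θ in (0:ℝ)..(2 * Real.pi),
    g (z + ε • pt (Real.cos θ) (Real.sin θ)) (pt (Real.cos θ) (Real.sin θ)) * (ε : ℂ)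

/-- The measurement segment `Γ_{b,a}`. -/
def seg (b a : ℝ) : Set Pt := {x | |x 0| ≤ a ∧ x 1 = b}

end

/-! The scattered field `Gs0 κ₁ κ₂ x y` depends on `x 0, y 0` only through the Fourier factor
`exp (i ξ (x 0 - y 0))`, and every other factor of its integrands is even in `ξ` (as `β_j` is) and
symmetric in `x 1, y 1`. Swapping `x` and `y` therefore amounts to the substitution `ξ ↦ -ξ`,
so `Gs0` is symmetric. In `B₁` both points lie below `Γ₀`, where the incident part of `G0` is
`Φ₂`, which is symmetric as well. -/

lemma beta_neg (κ ξ : ℝ) : beta κ (-ξ) = beta κ ξ := by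
  simp [beta]

lemma integral_mul_cexp_sub_comm {g : ℝ → ℂ} (hg : ∀ ξ, g (-ξ) = g ξ) (a b : ℝ) :
    ∫ ξ : ℝ, g ξ * Complex.exp (Complex.I * ξ * (a - b)) =
      ∫ ξ : ℝ, g ξ * Complex.exp (Complex.I * ξ * (b - a)) := by
  rw [← integral_neg_eq_self]
  congr 1 with ξ
  rw [hg]
  push_cast
  ring_nf

lemma Gs0_comm (κ₁ κ₂ : ℝ) (x y : Pt) : Gs0 κ₁ κ₂ y x = Gs0 κ₁ κ₂ x y := by
  rcases le_or_gt 0 (x 1) with hx | hx <;> rcases le_or_gt 0 (y 1) with hy | hy <;>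
    simp only [Gs0, hx, hy, not_le.mpr, not_lt.mpr, and_self, and_true, and_false,
      if_true, if_false] <;>
    congr 1 <;>
    rw [integral_mul_cexp_sub_comm (fun ξ => by simp only [beta_neg])] <;>
    rw [add_comm (y 1 : ℂ)]

theorem green_reciprocity_general
    (R : ℝ) (κ₁ κ₂ : ℝ)
    (Φ₁ Φ₂ : Pt → Pt → ℂ) (hΦ₂ : IsFundSol κ₂ Φ₂) :
    ∀ x ∈ B1 R, ∀ y ∈ B1 R, x ≠ y →
      G0 κ₁ κ₂ Φ₁ Φ₂ y x = G0 κ₁ κ₂ Φ₁ Φ₂ x y := by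
  rintro x ⟨-, -, hx⟩ y ⟨-, -, hy⟩ -
  simp only [G0, Gs0_comm κ₁ κ₂ x y, hx, hy, not_le.mpr, and_self, if_true,
    if_false, hΦ₂.symm y x]

/-- the reciprocity relation `G(y,x;Γ₀) = G(x,y;Γ₀)` for the two-layered
Green's function with planar interface `Γ₀`, for all `x, y ∈ B₁`, `x ≠ y`. -/
theorem green_reciprocity
    (R : ℝ) (hR : 0 < R) (κ₁ κ₂ : ℝ) (hκ₁ : 0 < κ₁) (hκ₂ : 0 < κ₂)
    (Φ₁ Φ₂ : Pt → Pt → ℂ) (hΦ₁ : IsFundSol κ₁ Φ₁) (hΦ₂ : IsFundSol κ₂ Φ₂) :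
    ∀ x ∈ B1 R, ∀ y ∈ B1 R, x ≠ y →
      G0 κ₁ κ₂ Φ₁ Φ₂ y x = G0 κ₁ κ₂ Φ₁ Φ₂ x y :=
  green_reciprocity_general R κ₁ κ₂ Φ₁ Φ₂ hΦ₂
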